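/- Let γ₁,…,γₙ ∈ ℂ be pairwise distinct, t ∈ ℂ nonzero, and b₁,…,bₙ ∈ ℂ. Let E₂(t) be the n×n matrix whose last row has entries [E₂(t)]_{n,k} = b_k t^{n−1−k} for 1 ≤ k ≤ n and all other entries 0. Then for all 1 ≤ i,j ≤ n, [S₀(t)⁻¹ · E₂(t) · S₀(t)]_{i,j} = (1/t) · [S₀(1)⁻¹]_{i,n} · Σ_{k=1}^{n} b_k γⱼ^{k−1}. -/

import Mathlib

/-!
Since `(γⱼ t)^i = t^i γⱼ^i`, we have `S₀(t) = diag(t^i) · S₀(1)`, so the last column of `S₀(t)⁻¹`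
is `t^{-(n-1)}` times that of `S₀(1)⁻¹`. The matrix `E₂(t) = e_n r(t)ᵀ` has rank one, hence
`S₀(t)⁻¹ E₂(t) S₀(t) = (S₀(t)⁻¹ e_n)(r(t)ᵀ S₀(t))`, and the powers of `t` in
`Σₖ b_k t^{n-2-k} (γⱼ t)^k = t^{n-2} Σₖ b_k γⱼ^k` cancel against `t^{-(n-1)}` up to `1/t`.
-/

open Matrix

theorem Finset.sum_mul_zpow_sub_mul_mul_pow {ι K : Type*} [Field K] {t : K} (ht : t ≠ 0)
    (m : ℤ) (s : Finset ι) (e : ι → ℕ) (b : ι → K) (x : K) :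
    ∑ k ∈ s, b k * t ^ (m - e k) * (x * t) ^ e k = t ^ m * ∑ k ∈ s, b k * x ^ e k := by
  rw [Finset.mul_sum]
  refine Finset.sum_congr rfl fun k _ => ?_
  have hpow : t ^ (m - e k) * t ^ e k = t ^ m := by
    rw [← zpow_natCast, ← zpow_add₀ ht, sub_add_cancel]
  linear_combination b k * x ^ e k * hpow

section ScaledVandermonde

variable {R K : Type*} {ι : Type*} [Fintype ι] [DecidableEq ι]

theorem Matrix.vandermonde_mul_const [CommRing R] {n : ℕ} (v : Fin n → R) (s : R) :
    vandermonde (fun i => v i * s) = vandermonde v * diagonal (fun j : Fin n => s ^ (j : ℕ)) := by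
  ext i j
  rw [mul_diagonal, vandermonde_apply, vandermonde_apply, mul_pow]

theorem Matrix.inv_diagonal_mul [Field K] {d : ι → K} (hd : ∀ i, d i ≠ 0) (A : Matrix ι ι K) :
    (diagonal d * A)⁻¹ = A⁻¹ * diagonal d⁻¹ := by
  have hinv : diagonal d * diagonal d⁻¹ = 1 := by
    rw [diagonal_mul_diagonal, ← diagonal_one]
    exact congrArg diagonal (funext fun i => mul_inv_cancel₀ (hd i))
  rw [mul_inv_rev, inv_eq_right_inv hinv]

theorem Matrix.mul_vecMulVec_single_mul [CommSemiring R] (A B : Matrix ι ι R) (k : ι)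
    (r : ι → R) :
    A * vecMulVec (Pi.single k 1) r * B = vecMulVec (A.col k) (r ᵥ* B) := by
  rw [mul_vecMulVec, vecMulVec_mul, mulVec_single_one]

end ScaledVandermonde

/-- For pairwise distinct `γ₁,…,γₙ ∈ ℂ`, nonzero `t ∈ ℂ` and `b₁,…,bₙ ∈ ℂ`, let `E₂(t)` be
the matrix whose only nonzero row is the last one, with entries `b_k t^{n−1−k}` (1-indexed,
integer exponents).  Then
`[S₀(t)⁻¹ · E₂(t) · S₀(t)]_{i,j} = (1/t) · [S₀(1)⁻¹]_{i,n} · Σ_{k=1}^{n} b_k γⱼ^{k−1}`. -/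
theorem stmt7 (n : ℕ) (hn : 1 ≤ n) (γ : Fin n → ℂ)
    (t : ℂ) (ht : t ≠ 0) (b : Fin n → ℂ)
    (S₀ : ℂ → Matrix (Fin n) (Fin n) ℂ)
    (hS₀ : ∀ s : ℂ, ∀ i j : Fin n, S₀ s i j = (γ j * s) ^ (i : ℕ))
    (E₂ : Matrix (Fin n) (Fin n) ℂ)
    (hE₂ : ∀ i j : Fin n, E₂ i j =
      if (i : ℕ) = n - 1 then b j * t ^ ((n : ℤ) - 2 - (j : ℕ)) else 0) :
    ∀ i j : Fin n, ((S₀ t)⁻¹ * E₂ * S₀ t) i j =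
      (1 / t) * ((S₀ 1)⁻¹ i ⟨n - 1, by omega⟩ * ∑ k : Fin n, b k * γ j ^ (k : ℕ)) := by
  set N : Fin n := ⟨n - 1, by omega⟩
  have hS : ∀ s, S₀ s = (vandermonde (fun j => γ j * s))ᵀ := fun s => by
    ext i j
    rw [hS₀, transpose_apply, vandermonde_apply]
  have hE : E₂ = vecMulVec (Pi.single N 1) (fun k => b k * t ^ ((n : ℤ) - 2 - (k : ℕ))) := by
    ext i k
    rw [hE₂, vecMulVec_apply, Pi.single_apply]
    simp only [Fin.ext_iff]
    split_ifs <;> simp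
  intro i j
  have hcol : (S₀ t)⁻¹ i N = (S₀ 1)⁻¹ i N * (t ^ (n - 1))⁻¹ := by
    rw [hS, hS 1, vandermonde_mul_const, transpose_mul, diagonal_transpose,
      inv_diagonal_mul fun k => pow_ne_zero _ ht, mul_diagonal]
    simp only [mul_one, Pi.inv_apply, N]
  have hrow : ((fun k => b k * t ^ ((n : ℤ) - 2 - (k : ℕ))) ᵥ* S₀ t) j =
      t ^ ((n : ℤ) - 2) * ∑ k : Fin n, b k * γ j ^ (k : ℕ) := by
    simp only [vecMul, dotProduct, hS₀]
    exact Finset.sum_mul_zpow_sub_mul_mul_pow ht _ _ _ _ _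
  have hscale : (t ^ (n - 1))⁻¹ * t ^ ((n : ℤ) - 2) = 1 / t := by
    rw [← zpow_natCast, Nat.cast_sub hn, Nat.cast_one, ← _root_.zpow_neg, ← zpow_add₀ ht,
      show -((n : ℤ) - 1) + ((n : ℤ) - 2) = -1 by ring, _root_.zpow_neg_one, one_div]
  rw [hE, mul_vecMulVec_single_mul, vecMulVec_apply, col_apply, hcol, hrow]
  linear_combination ((S₀ 1)⁻¹ i N * ∑ k : Fin n, b k * γ j ^ (k : ℕ)) * hscale
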